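/- arXiv:1204.1587 — 4 statements merged into one kernel-verified Lean document; each statement's English description precedes it below -/
import Mathlib

section
/- Let (e_n)_{n∈ℤ} be an orthonormal basis of a separable infinite-dimensional complex Hilbert space H and let (ω_n)_{n∈ℤ} be a bounded sequence of positive real numbers with lim_{n→+∞} ω_n = 0 and lim_{n→−∞} ω_n = 0. Then the bilateral weighted shift T determined by T e_n = ω_n e_{n+1} (n ∈ ℤ) is strongly irreducible. -/
open Filter Topology

noncomputable section

variable {H : Type*} [NormedAddCommGroup H] [InnerProductSpace ℂ H] [CompleteSpace H]

/-- An operator `T` is strongly irreducible if there is no bounded idempotent `P`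
with `P ≠ 0`, `P ≠ 1` commuting with `T`. -/
def StronglyIrreducible (T : H →L[ℂ] H) : Prop :=
  ¬ ∃ P : H →L[ℂ] H, P * P = P ∧ P ≠ 0 ∧ P ≠ 1 ∧ P * T = T * P

/-- A sequence `f` is a Schauder basis if every vector has a unique norm-convergent
expansion `x = ∑ αₙ • fₙ`. -/
def IsSchauderBasis (f : ℕ → H) : Prop :=
  ∀ x : H, ∃! α : ℕ → ℂ,
    Tendsto (fun k => ∑ n ∈ Finset.range k, α n • f n) atTop (𝓝 x)

/-- A Schauder basis is unconditional if every convergent expansion converges after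
every permutation of its terms. -/
def IsUnconditionalSchauderBasis (f : ℕ → H) : Prop :=
  IsSchauderBasis f ∧
  ∀ (α : ℕ → ℂ) (x : H),
    Tendsto (fun k => ∑ n ∈ Finset.range k, α n • f n) atTop (𝓝 x) →
    ∀ σ : Equiv.Perm ℕ,
      ∃ y, Tendsto (fun k => ∑ n ∈ Finset.range k, α (σ n) • f (σ n)) atTop (𝓝 y)

/-- Two bases are equivalent if exactly the same scalar sequences give convergent series. -/
def BasesEquivalent (f g : ℕ → H) : Prop :=
  ∀ α : ℕ → ℂ,
    (∃ x, Tendsto (fun k => ∑ n ∈ Finset.range k, α n • f n) atTop (𝓝 x)) ↔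
    (∃ x, Tendsto (fun k => ∑ n ∈ Finset.range k, α n • g n) atTop (𝓝 x))

/-!
An operator `Q` commuting with the weighted shift has matrix entries `q i j = ⟪e i, Q (e j)⟫`
with `ω j * q (i + 1) (j + 1) = ω i * q i j`. Along the `d`-th superdiagonal the quantity
`ω k ⋯ ω (k + d - 1) * q k (k + d)` is therefore independent of `k`; as `k → +∞` the weights
tend to `0` while `|q| ≤ ‖Q‖`, so it vanishes. Thus `Q` is lower triangular with constant
diagonal `c`. If `Q` is idempotent then `c ^ 2 = c`, and after replacing `Q` by `1 - Q` we may
take `c = 0`; a strictly lower triangular idempotent is `0`.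
-/

open scoped InnerProductSpace

section WindowProd

variable {M : Type*} [CommMonoid M]

def windowProd (ω : ℤ → M) (d : ℕ) (k : ℤ) : M :=
  ∏ s ∈ Finset.range d, ω (k + s)

theorem windowProd_succ_mul (ω : ℤ → M) (d : ℕ) (k : ℤ) :
    windowProd ω d (k + 1) * ω k = windowProd ω d k * ω (k + d) := by
  have hsucc : windowProd ω (d + 1) k = windowProd ω d (k + 1) * ω k := by
    rw [windowProd, Finset.prod_range_succ']
    simp only [Nat.cast_add, Nat.cast_one, Nat.cast_zero, add_zero, windowProd]
    exact congrArg (· * ω k) (Finset.prod_congr rfl fun s _ => congrArg ω (by ring))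
  rw [← hsucc, windowProd, Finset.prod_range_succ, windowProd]

theorem tendsto_windowProd_atTop {M : Type*} [CommMonoidWithZero M] [TopologicalSpace M]
    [ContinuousMul M] {ω : ℤ → M} (hω : Tendsto ω atTop (𝓝 0)) {d : ℕ} (hd : 0 < d) :
    Tendsto (windowProd ω d) atTop (𝓝 0) := by
  have hfactor : ∀ s ∈ Finset.range d, Tendsto (fun k : ℤ => ω (k + s)) atTop (𝓝 0) :=
    fun s _ => hω.comp (tendsto_atTop_add_const_right _ _ tendsto_id)
  have h := tendsto_finsetProd _ hfactor
  rwa [Finset.prod_eq_zero (Finset.mem_range.mpr hd) rfl] at h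

end WindowProd

namespace HilbertBasis

variable {𝕜 E ι : Type*} [RCLike 𝕜] [NormedAddCommGroup E] [InnerProductSpace 𝕜 E]

theorem hasSum_inner_apply (e : HilbertBasis ι 𝕜 E) (A : E →L[𝕜] E) (x y : E) :
    HasSum (fun k => ⟪x, A (e k)⟫_𝕜 * ⟪e k, y⟫_𝕜) ⟪x, A y⟫_𝕜 := by
  refine (((e.hasSum_repr y).mapL A).mapL (innerSL 𝕜 x)).congr_fun fun k => ?_
  rw [map_smul, innerSL_apply_apply, inner_smul_right, e.repr_apply_apply, mul_comm]

theorem continuousLinearMap_ext (e : HilbertBasis ι 𝕜 E) {A B : E →L[𝕜] E}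
    (h : ∀ i j, ⟪e i, A (e j)⟫_𝕜 = ⟪e i, B (e j)⟫_𝕜) : A = B := by
  refine ContinuousLinearMap.ext_on
    (Submodule.dense_iff_topologicalClosure_eq_top.mpr e.dense_span) ?_
  rintro _ ⟨j, rfl⟩
  refine e.repr.injective (lp.ext (funext fun i => ?_))
  simpa only [e.repr_apply_apply] using h i j

def IsLowerTriangular (e : HilbertBasis ℤ 𝕜 E) (A : E →L[𝕜] E) : Prop :=
  ∀ i j, i < j → ⟪e i, A (e j)⟫_𝕜 = 0

variable {e : HilbertBasis ℤ 𝕜 E} {A B : E →L[𝕜] E}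

theorem IsLowerTriangular.inner_mul_apply_self (hA : e.IsLowerTriangular A)
    (hB : e.IsLowerTriangular B) (i : ℤ) :
    ⟪e i, (A * B) (e i)⟫_𝕜 = ⟪e i, A (e i)⟫_𝕜 * ⟪e i, B (e i)⟫_𝕜 := by
  rw [mul_apply_eq_comp]
  refine (e.hasSum_inner_apply A _ _).unique (hasSum_single i fun k hk => ?_)
  rcases hk.lt_or_gt with hki | hik
  · rw [hB k i hki, mul_zero]
  · rw [hA i k hik, zero_mul]

theorem IsLowerTriangular.eq_zero_of_isIdempotentElem (hA : e.IsLowerTriangular A)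
    (hAA : IsIdempotentElem A) (hdiag : ∀ j, ⟪e j, A (e j)⟫_𝕜 = 0) : A = 0 := by
  -- Induction on `i - j`: in `A i j = ∑ₖ A i k * A k j` every term with `j < k < i` is
  -- closer to the diagonal, and every other term contains an entry on or above it.
  have hentry : ∀ N : ℕ, ∀ i j : ℤ, i - j ≤ N → ⟪e i, A (e j)⟫_𝕜 = 0 := by
    intro N
    induction N with
    | zero =>
      intro i j hij
      rcases (show i ≤ j by omega).lt_or_eq with hlt | rfl
      exacts [hA i j hlt, hdiag i]
    | succ N ih =>
      intro i j _
      have hsum := e.hasSum_inner_apply A (e i) (A (e j))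
      rw [← mul_apply_eq_comp, hAA.eq] at hsum
      refine hsum.unique (hasSum_zero.congr_fun fun k => ?_)
      by_cases hkj : k ≤ j
      · rcases hkj.lt_or_eq with hlt | rfl
        · rw [hA k j hlt, mul_zero]
        · rw [hdiag k, mul_zero]
      by_cases hik : i ≤ k
      · rcases hik.lt_or_eq with hlt | rfl
        · rw [hA i k hlt, zero_mul]
        · rw [hdiag i, zero_mul]
      rw [ih i k (by omega), zero_mul]
  exact e.continuousLinearMap_ext fun i j => by
    rw [hentry (i - j).toNat i j (Int.self_le_toNat _), zero_apply, inner_zero_right]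

end HilbertBasis

section WeightedShift

variable {𝕜 E : Type*} [RCLike 𝕜] [NormedAddCommGroup E] [InnerProductSpace 𝕜 E]
  {e : HilbertBasis ℤ 𝕜 E} {ω : ℤ → 𝕜} {T : E →L[𝕜] E}

theorem inner_succ_apply_of_weightedShift (hT : ∀ n, T (e n) = ω n • e (n + 1)) (i : ℤ)
    (y : E) : ⟪e (i + 1), T y⟫_𝕜 = ω i * ⟪e i, y⟫_𝕜 := by
  rw [(e.hasSum_inner_apply T _ y).unique (hasSum_single i fun k hk => ?_)]
  · rw [hT, inner_smul_right, orthonormal_iff_ite.mp e.orthonormal, if_pos rfl, mul_one]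
  · rw [hT, inner_smul_right, orthonormal_iff_ite.mp e.orthonormal, if_neg (by omega), mul_zero,
      zero_mul]

theorem inner_succ_apply_succ_of_commute (hT : ∀ n, T (e n) = ω n • e (n + 1))
    {Q : E →L[𝕜] E} (hQT : Commute Q T) (i j : ℤ) :
    ω j * ⟪e (i + 1), Q (e (j + 1))⟫_𝕜 = ω i * ⟪e i, Q (e j)⟫_𝕜 := by
  rw [← inner_succ_apply_of_weightedShift hT, ← mul_apply_eq_comp,
    ← hQT.eq, mul_apply_eq_comp, hT, map_smul, inner_smul_right]

theorem periodic_windowProd_mul_inner (hT : ∀ n, T (e n) = ω n • e (n + 1))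
    (hω : ∀ n, ω n ≠ 0) {Q : E →L[𝕜] E} (hQT : Commute Q T) (d : ℕ) :
    Function.Periodic (fun k => windowProd ω d k * ⟪e k, Q (e (k + d))⟫_𝕜) 1 := by
  intro k
  have hrel := inner_succ_apply_succ_of_commute hT hQT k (k + d)
  have hwin := windowProd_succ_mul ω d k
  dsimp only
  rw [add_right_comm k 1]
  apply mul_left_cancel₀ (hω (k + d))
  linear_combination windowProd ω d (k + 1) * hrel + ⟪e k, Q (e (k + d))⟫_𝕜 * hwin

theorem inner_apply_self_eq_of_commute (hT : ∀ n, T (e n) = ω n • e (n + 1))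
    (hω : ∀ n, ω n ≠ 0) {Q : E →L[𝕜] E} (hQT : Commute Q T) (j : ℤ) :
    ⟪e j, Q (e j)⟫_𝕜 = ⟪e 0, Q (e 0)⟫_𝕜 := by
  simpa [windowProd] using (periodic_windowProd_mul_inner hT hω hQT 0).int_mul j 0

theorem isLowerTriangular_of_commute (hT : ∀ n, T (e n) = ω n • e (n + 1))
    (hω : ∀ n, ω n ≠ 0) (htop : Tendsto ω atTop (𝓝 0)) {Q : E →L[𝕜] E} (hQT : Commute Q T) :
    e.IsLowerTriangular Q := by
  intro i j hij
  obtain ⟨d, rfl⟩ : ∃ d : ℕ, j = i + d := ⟨(j - i).toNat, by omega⟩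
  set F := fun k => windowProd ω d k * ⟪e k, Q (e (k + d))⟫_𝕜
  have hF : ∀ k, F k = F i := fun k => by
    simpa using (periodic_windowProd_mul_inner hT hω hQT d).int_mul (k - i) i
  have hbdd : IsBoundedUnder (· ≤ ·) atTop fun k => ‖⟪e k, Q (e (k + d))⟫_𝕜‖ :=
    isBoundedUnder_of ⟨‖Q‖, fun k => by
      simpa [e.orthonormal.1] using (norm_inner_le_norm (𝕜 := 𝕜) _ _).trans
        (mul_le_mul_of_nonneg_left (Q.le_opNorm (e (k + d))) (norm_nonneg (e k)))⟩
  have hF0 : Tendsto F atTop (𝓝 0) :=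
    (tendsto_windowProd_atTop htop (by omega)).zero_mul_isBoundedUnder_le hbdd
  have hFi : F i = 0 := tendsto_nhds_unique (tendsto_const_nhds.congr fun k => (hF k).symm) hF0
  exact (mul_eq_zero.mp hFi).resolve_left
    (Finset.prod_ne_zero_iff.mpr fun s _ => hω (i + s))

theorem eq_zero_of_commute_of_isIdempotentElem (hT : ∀ n, T (e n) = ω n • e (n + 1))
    (hω : ∀ n, ω n ≠ 0) (htop : Tendsto ω atTop (𝓝 0)) {Q : E →L[𝕜] E} (hQT : Commute Q T)
    (hQ : IsIdempotentElem Q) (h0 : ⟪e 0, Q (e 0)⟫_𝕜 = 0) : Q = 0 :=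
  (isLowerTriangular_of_commute hT hω htop hQT).eq_zero_of_isIdempotentElem hQ fun j =>
    (inner_apply_self_eq_of_commute hT hω hQT j).trans h0

end WeightedShift

theorem stmt3_general (e : HilbertBasis ℤ ℂ H) (ω : ℤ → ℝ)
    (hpos : ∀ n, 0 < ω n)
    (htop : Tendsto ω atTop (𝓝 0))
    (T : H →L[ℂ] H) (hT : ∀ n : ℤ, T (e n) = (ω n : ℂ) • e (n + 1)) :
    StronglyIrreducible T := by
  have hω : ∀ n, (ω n : ℂ) ≠ 0 := fun n => Complex.ofReal_ne_zero.mpr (hpos n).ne'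
  have htop' : Tendsto (fun n => (ω n : ℂ)) atTop (𝓝 0) := by simpa using htop.ofReal
  rintro ⟨P, hP, hP0, hP1, hPT⟩
  replace hP : IsIdempotentElem P := hP
  replace hPT : Commute P T := hPT
  have hL := isLowerTriangular_of_commute hT hω htop' hPT
  have hc : IsIdempotentElem ⟪e 0, P (e 0)⟫_ℂ := by
    rw [IsIdempotentElem, ← hL.inner_mul_apply_self hL, hP.eq]
  rcases IsIdempotentElem.iff_eq_zero_or_one.mp hc with h0 | h1
  · exact hP0 (eq_zero_of_commute_of_isIdempotentElem hT hω htop' hPT hP h0)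
  · refine hP1 (sub_eq_zero.mp ?_).symm
    refine eq_zero_of_commute_of_isIdempotentElem hT hω htop' ((Commute.one_left T).sub_left hPT)
      hP.one_sub ?_
    rw [sub_apply, one_apply_eq_self, inner_sub_right, h1,
      orthonormal_iff_ite.mp e.orthonormal, if_pos rfl, sub_self]

theorem stmt3 (e : HilbertBasis ℤ ℂ H) (ω : ℤ → ℝ)
    (hpos : ∀ n, 0 < ω n) (hbdd : ∃ C : ℝ, ∀ n, ω n ≤ C)
    (htop : Tendsto ω atTop (𝓝 0)) (hbot : Tendsto ω atBot (𝓝 0))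
    (T : H →L[ℂ] H) (hT : ∀ n : ℤ, T (e n) = (ω n : ℂ) • e (n + 1)) :
    StronglyIrreducible T :=
  stmt3_general e ω hpos htop T hT
end
end

section
/- Let (e_n)_{n∈ℤ} be an orthonormal basis of a separable infinite-dimensional complex Hilbert space H and let (ω_n)_{n∈ℤ} be a bounded sequence of positive real numbers such that sup{ω_n : n ≥ 0} < inf{ω_n : n < 0}. Then the bilateral weighted shift T determined by T e_n = ω_n e_{n+1} (n ∈ ℤ) is strongly irreducible. -/
/-!
If `P` commutes with the weighted shift, its matrix is constant along diagonals once rescaled by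
the weight products `W n = ω 0 ⋯ ω (n - 1)`: `⟪e m, P (e n)⟫ = c (m - n) * W m / W n`, and
`P ^ 2 = P` says that `c` is idempotent for convolution on `ℤ`. After dividing `T` by some `r`
strictly inside the gap, the weights are `< 1` on `n ≥ 0` and `> 1` on `n < 0`, so `W` decays
geometrically in both directions and `c ∈ ℓ¹(ℤ)`. Then `∑ c n e^{inθ}` is a continuous idempotent
function on the circle, hence `0` or `1`; so `c = 0` or `c = δ₀`, that is, `P = 0` or `P = 1`.
-/

open Filter Topology

noncomputable section

variable {H : Type*} [NormedAddCommGroup H] [InnerProductSpace ℂ H] [CompleteSpace H]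

section WeightProd

open Finset

variable {K : Type*}

-- One of the two products is empty: `ω 0 ⋯ ω (n - 1)` for `n ≥ 0`, `(ω n ⋯ ω (-1))⁻¹` for `n < 0`.
def weightProd [CommGroupWithZero K] (ω : ℤ → K) (n : ℤ) : K :=
  (∏ i ∈ Ico 0 n, ω i) / ∏ i ∈ Ico n 0, ω i

variable {ω : ℤ → K}

@[simp]
lemma weightProd_zero [CommGroupWithZero K] : weightProd ω 0 = 1 := by
  simp [weightProd]

lemma weightProd_add_one [CommGroupWithZero K] (hω : ∀ n, ω n ≠ 0) (n : ℤ) :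
    weightProd ω (n + 1) = weightProd ω n * ω n := by
  rcases le_or_gt 0 n with hn | hn
  · simp [weightProd, Ico_eq_empty_of_le hn, Ico_eq_empty_of_le (by omega : 0 ≤ n + 1),
      ← prod_Ico_mul_eq_prod_Ico_add_one hn]
  · rw [weightProd, weightProd, Ico_eq_empty_of_le (by omega : n + 1 ≤ 0),
      Ico_eq_empty_of_le hn.le, ← insert_Ico_add_one_left_eq_Ico hn, prod_insert (by simp)]
    field_simp [hω n]

lemma weightProd_ne_zero [CommGroupWithZero K] (hω : ∀ n, ω n ≠ 0) (n : ℤ) :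
    weightProd ω n ≠ 0 :=
  div_ne_zero (prod_ne_zero_iff.2 fun i _ => hω i) (prod_ne_zero_iff.2 fun i _ => hω i)

lemma norm_weightProd_le [NormedField K] {t : ℝ} (ht : 0 < t)
    (hnonneg : ∀ n, 0 ≤ n → ‖ω n‖ ≤ t) (hneg : ∀ n < 0, t⁻¹ ≤ ‖ω n‖) (n : ℤ) :
    ‖weightProd ω n‖ ≤ t ^ n.natAbs := by
  rcases le_or_gt 0 n with hn | hn
  · rw [weightProd, Ico_eq_empty_of_le hn, prod_empty, div_one, norm_prod]
    calc ∏ i ∈ Ico 0 n, ‖ω i‖ ≤ ∏ _i ∈ Ico 0 n, t :=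
          prod_le_prod (fun _ _ => norm_nonneg _) fun i hi => hnonneg i (mem_Ico.1 hi).1
      _ = t ^ n.natAbs := by simp only [prod_const, Int.card_Ico, sub_zero]; congr 1; omega
  · rw [weightProd, Ico_eq_empty_of_le hn.le, prod_empty, one_div, norm_inv, norm_prod]
    refine inv_le_of_inv_le₀ (by positivity) ?_
    calc (t ^ n.natAbs)⁻¹ = ∏ _i ∈ Ico n 0, t⁻¹ := by
          simp only [prod_const, Int.card_Ico, zero_sub, inv_pow]; congr 2; omega
      _ ≤ ∏ i ∈ Ico n 0, ‖ω i‖ :=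
          prod_le_prod (fun _ _ => by positivity) fun i hi => hneg i (mem_Ico.1 hi).2

end WeightProd

lemma HilbertBasis.repr_apply_eq_of_hasSum {ι 𝕜 E : Type*} [RCLike 𝕜] [NormedAddCommGroup E]
    [InnerProductSpace 𝕜 E] (b : HilbertBasis ι 𝕜 E) {c : ι → 𝕜} {x : E}
    (h : HasSum (fun i => c i • b i) x) (i : ι) : b.repr x i = c i := by
  classical
  rw [b.repr_apply_apply]
  refine (h.mapL (innerSL 𝕜 (b i))).unique ?_
  convert hasSum_ite_eq i (c i) using 2 with k
  rcases eq_or_ne k i with rfl | hki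
  · simp [b.orthonormal.1 k]
  · simp [hki, b.orthonormal.2 hki.symm]

lemma ContinuousMap.eq_zero_or_eq_one_of_isIdempotentElem {X R : Type*} [TopologicalSpace X]
    [ConnectedSpace X] [TopologicalSpace R] [T1Space R] [MonoidWithZero R] [ContinuousMul R]
    [IsLeftCancelMulZero R] {g : C(X, R)} (hg : IsIdempotentElem g) : g = 0 ∨ g = 1 := by
  have hmaps : Set.MapsTo g Set.univ {0, 1} := fun x _ =>
    IsIdempotentElem.iff_eq_zero_or_one.1 (show g x * g x = g x from congr($hg x))
  obtain ⟨c, hc, hgc⟩ := isPreconnected_univ.eqOn_const_of_mapsTo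
    (isDiscrete_iff_discreteTopology.2 inferInstance) g.continuous.continuousOn hmaps ⟨0, by simp⟩
  rcases hc with rfl | rfl
  · exact .inl (ext fun x => hgc (Set.mem_univ x))
  · exact .inr (ext fun x => hgc (Set.mem_univ x))

section IdempotentSequence

variable {γ : ℤ → ℂ}

lemma hasSum_smul_fourier (hγ : Summable fun n => ‖γ n‖) :
    HasSum (fun n => γ n • fourier (T := 1) n) (∑' n, γ n • fourier n) :=
  (Summable.of_norm (by simpa [norm_smul, fourier_norm] using hγ)).hasSum

lemma fourierCoeff_tsum_smul_fourier (hγ : Summable fun n => ‖γ n‖) :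
    fourierCoeff ⇑(∑' n, γ n • fourier (T := 1) n) = γ := by
  ext m
  rw [← fourierCoeff_toLp, ← fourierBasis_repr]
  refine fourierBasis.repr_apply_eq_of_hasSum ?_ m
  simpa only [map_smul, coe_fourierBasis] using
    (hasSum_smul_fourier hγ).mapL (ContinuousMap.toLp 2 AddCircle.haarAddCircle ℂ)

lemma isIdempotentElem_tsum_smul_fourier (hγ : Summable fun n => ‖γ n‖)
    (hconv : ∀ d, HasSum (fun k => γ k * γ (d - k)) (γ d)) :
    IsIdempotentElem (∑' n, γ n • fourier (T := 1) n) := by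
  set f : ℤ → C(AddCircle (1 : ℝ), ℂ) := fun n => γ n • fourier n
  have hf : Summable fun n => ‖f n‖ := by simpa [f, norm_smul, fourier_norm] using hγ
  have hprod : HasSum (fun z : ℤ × ℤ => f z.1 * f z.2) ((∑' n, f n) * ∑' n, f n) := by
    rw [tsum_mul_tsum_of_summable_norm hf hf]
    exact (summable_mul_of_summable_norm hf hf).hasSum
  -- regroup the Cauchy product along the diagonals `k + l = d`
  let shear : ℤ × ℤ ≃ ℤ × ℤ :=
    ⟨fun p => (p.2, p.1 - p.2), fun p => (p.1 + p.2, p.1), fun p => by simp, fun p => by simp⟩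
  have hdiag : HasSum (fun w : ℤ × ℤ => (γ w.2 * γ (w.1 - w.2)) • fourier (T := 1) w.1)
      ((∑' n, f n) * ∑' n, f n) := by
    refine (shear.hasSum_iff.2 hprod).congr_fun fun w => ?_
    ext x
    have hadd := fourier_add (m := w.2) (n := w.1 - w.2) (x := x)
    rw [add_sub_cancel] at hadd
    simp only [f, shear, Equiv.coe_fn_mk, Function.comp_apply, ContinuousMap.mul_apply,
      ContinuousMap.smul_apply, smul_eq_mul, hadd]
    ring
  have hfib : HasSum (fun d => γ d • fourier (T := 1) d) ((∑' n, f n) * ∑' n, f n) :=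
    hdiag.prod_fiberwise fun d => (hconv d).smul_const (fourier d)
  exact hfib.unique (hasSum_smul_fourier hγ)

theorem eq_zero_or_eq_single_of_hasSum_conv_self (hγ : Summable fun n => ‖γ n‖)
    (hconv : ∀ d, HasSum (fun k => γ k * γ (d - k)) (γ d)) : γ = 0 ∨ γ = Pi.single 0 1 := by
  rw [← fourierCoeff_tsum_smul_fourier hγ]
  rcases ContinuousMap.eq_zero_or_eq_one_of_isIdempotentElem
    (isIdempotentElem_tsum_smul_fourier hγ hconv) with h | h <;> rw [h]
  · left
    ext n
    simp [fourierCoeff]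
  · right
    rw [← fourierCoeff_fourier (T := 1) 0]
    congr
    ext x
    simp

end IdempotentSequence

lemma summable_pow_natAbs {t : ℝ} (ht₀ : 0 ≤ t) (ht₁ : t < 1) :
    Summable fun n : ℤ => t ^ n.natAbs :=
  .of_nat_of_neg (by simpa using summable_geometric_of_lt_one ht₀ ht₁)
    (by simpa using summable_geometric_of_lt_one ht₀ ht₁)

section HilbertBasisMatrix

variable {ι 𝕜 E : Type*} [RCLike 𝕜] [NormedAddCommGroup E] [InnerProductSpace 𝕜 E]
  (b : HilbertBasis ι 𝕜 E)

local notation "⟪" x ", " y "⟫" => @inner 𝕜 _ _ x y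

lemma HilbertBasis.ext_inner {x y : E} (h : ∀ i, ⟪b i, x⟫ = ⟪b i, y⟫) : x = y :=
  b.repr.injective (lp.ext (funext fun i => by simp [b.repr_apply_apply, h i]))

lemma HilbertBasis.continuousLinearMap_ext_s4 {F : Type*} [NormedAddCommGroup F] [NormedSpace 𝕜 F]
    {A B : E →L[𝕜] F} (h : ∀ i, A (b i) = B (b i)) : A = B :=
  ContinuousLinearMap.ext_on (Submodule.dense_iff_topologicalClosure_eq_top.2 b.dense_span)
    (by rintro _ ⟨i, rfl⟩; exact h i)

lemma HilbertBasis.continuousLinearMap_ext_inner {A B : E →L[𝕜] E}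
    (h : ∀ i j, ⟪b i, A (b j)⟫ = ⟪b i, B (b j)⟫) : A = B :=
  b.continuousLinearMap_ext_s4 fun j => b.ext_inner fun i => h i j

lemma HilbertBasis.hasSum_inner_mul_inner_apply (A B : E →L[𝕜] E) (i j : ι) :
    HasSum (fun k => ⟪b i, A (b k)⟫ * ⟪b k, B (b j)⟫) ⟪b i, (A * B) (b j)⟫ := by
  convert (b.hasSum_repr (B (b j))).mapL ((innerSL 𝕜 (b i)).comp A) using 1
  · ext k
    simp [b.repr_apply_apply, mul_comm]
  · rfl

end HilbertBasisMatrix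

section WeightedShift

variable {𝕜 E : Type*} [RCLike 𝕜] [NormedAddCommGroup E] [InnerProductSpace 𝕜 E]
  (e : HilbertBasis ℤ 𝕜 E) {ω : ℤ → 𝕜} {T P : E →L[𝕜] E}

local notation "⟪" x ", " y "⟫" => @inner 𝕜 _ _ x y

lemma inner_add_one_weightedShift (hT : ∀ n, T (e n) = ω n • e (n + 1)) (m : ℤ) (x : E) :
    ⟪e (m + 1), T x⟫ = ω m * ⟪e m, x⟫ := by
  suffices (innerSL 𝕜 (e (m + 1))).comp T = ω m • innerSL 𝕜 (e m) from congr($this x)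
  refine e.continuousLinearMap_ext_s4 fun k => ?_
  rcases eq_or_ne k m with rfl | hkm
  · simp [hT, e.orthonormal.1]
  · simp [hT, e.orthonormal.2 hkm.symm,
      e.orthonormal.2 (fun h => hkm (add_right_cancel h).symm)]

lemma inner_commute_weightedShift (hT : ∀ n, T (e n) = ω n • e (n + 1)) (hPT : P * T = T * P)
    (m n : ℤ) : ω n * ⟪e (m + 1), P (e (n + 1))⟫ = ω m * ⟪e m, P (e n)⟫ := by
  have := congr(⟪e (m + 1), $hPT (e n)⟫)
  simpa [hT, inner_smul_right, inner_add_one_weightedShift e hT] using this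

def shiftCoeff (e : HilbertBasis ℤ 𝕜 E) (ω : ℤ → 𝕜) (P : E →L[𝕜] E) (d : ℤ) : 𝕜 :=
  ⟪e d, P (e 0)⟫ / weightProd ω d

lemma inner_apply_eq_shiftCoeff (hω : ∀ n, ω n ≠ 0) (hT : ∀ n, T (e n) = ω n • e (n + 1))
    (hPT : P * T = T * P) (m n : ℤ) :
    ⟪e m, P (e n)⟫ = shiftCoeff e ω P (m - n) * weightProd ω m / weightProd ω n := by
  set d := m - n
  have hperiodic : Function.Periodic
      (fun k => ⟪e (k + d), P (e k)⟫ * weightProd ω k / weightProd ω (k + d)) 1 := fun k => by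
    have hcomm := inner_commute_weightedShift e hT hPT (k + d) k
    dsimp only
    rw [show k + 1 + d = k + d + 1 by ring, weightProd_add_one hω, weightProd_add_one hω]
    field_simp [hω k, hω (k + d), weightProd_ne_zero hω k, weightProd_ne_zero hω (k + d)]
    linear_combination hcomm
  have := hperiodic.int_mul_eq n
  simp only [Int.cast_id, mul_one, zero_add, weightProd_zero] at this
  rw [show n + d = m by ring] at this
  rw [shiftCoeff, ← this]
  field_simp [weightProd_ne_zero hω]

lemma hasSum_shiftCoeff_mul_shiftCoeff (hω : ∀ n, ω n ≠ 0) (hT : ∀ n, T (e n) = ω n • e (n + 1))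
    (hPT : P * T = T * P) (hP : IsIdempotentElem P) (d : ℤ) :
    HasSum (fun k => shiftCoeff e ω P k * shiftCoeff e ω P (d - k)) (shiftCoeff e ω P d) := by
  have h := (e.hasSum_inner_mul_inner_apply P P d 0).div_const (weightProd ω d)
  rw [hP.eq] at h
  refine h.congr_fun fun k => ?_
  rw [inner_apply_eq_shiftCoeff e hω hT hPT d k, inner_apply_eq_shiftCoeff e hω hT hPT k 0,
    sub_zero, weightProd_zero, div_one]
  field_simp [weightProd_ne_zero hω]

lemma norm_shiftCoeff_le (hω : ∀ n, ω n ≠ 0) (hT : ∀ n, T (e n) = ω n • e (n + 1))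
    (hPT : P * T = T * P) (d : ℤ) : ‖shiftCoeff e ω P d‖ ≤ ‖P‖ * ‖weightProd ω (-d)‖ := by
  have h := inner_apply_eq_shiftCoeff e hω hT hPT 0 (-d)
  rw [sub_neg_eq_add, zero_add, weightProd_zero, mul_one, eq_div_iff (weightProd_ne_zero hω _)] at h
  rw [← h, norm_mul]
  gcongr
  calc ‖⟪e 0, P (e (-d))⟫‖ ≤ ‖e 0‖ * ‖P (e (-d))‖ := norm_inner_le_norm _ _
    _ ≤ ‖e 0‖ * (‖P‖ * ‖e (-d)‖) := by gcongr; exact P.le_opNorm _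
    _ = ‖P‖ := by simp [e.orthonormal.1]

end WeightedShift

theorem eq_zero_or_eq_one_of_commute_weightedShift {E : Type*} [NormedAddCommGroup E]
    [InnerProductSpace ℂ E] (e : HilbertBasis ℤ ℂ E) {ω : ℤ → ℂ} {t : ℝ} (ht₀ : 0 < t)
    (ht₁ : t < 1) (hω : ∀ n, ω n ≠ 0) (hnonneg : ∀ n, 0 ≤ n → ‖ω n‖ ≤ t)
    (hneg : ∀ n < 0, t⁻¹ ≤ ‖ω n‖) {T P : E →L[ℂ] E} (hT : ∀ n, T (e n) = ω n • e (n + 1))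
    (hP : IsIdempotentElem P) (hPT : P * T = T * P) : P = 0 ∨ P = 1 := by
  have hsum : Summable fun d => ‖shiftCoeff e ω P d‖ :=
    ((summable_pow_natAbs ht₀.le ht₁).mul_left ‖P‖).of_nonneg_of_le (fun _ => norm_nonneg _)
      fun d => (norm_shiftCoeff_le e hω hT hPT d).trans <| by
        gcongr; simpa using norm_weightProd_le ht₀ hnonneg hneg (-d)
  have hentries := inner_apply_eq_shiftCoeff e hω hT hPT
  rcases eq_zero_or_eq_single_of_hasSum_conv_self hsum
    (hasSum_shiftCoeff_mul_shiftCoeff e hω hT hPT hP) with h | h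
  · exact .inl (e.continuousLinearMap_ext_inner fun m n => by simp [hentries, h])
  · refine .inr (e.continuousLinearMap_ext_inner fun m n => ?_)
    rcases eq_or_ne m n with rfl | hmn
    · simp [hentries, h, weightProd_ne_zero hω, e.orthonormal.1]
    · simp [hentries, h, sub_ne_zero.2 hmn, e.orthonormal.2 hmn]

theorem eq_zero_or_eq_one_of_commute_weightedShift_of_lt {E : Type*} [NormedAddCommGroup E]
    [InnerProductSpace ℂ E] (e : HilbertBasis ℤ ℂ E) {ω : ℤ → ℝ} (hpos : ∀ n, 0 < ω n) {S I : ℝ}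
    (hS : ∀ n, 0 ≤ n → ω n ≤ S) (hI : ∀ n < 0, I ≤ ω n) (hSI : S < I) {T P : E →L[ℂ] E}
    (hT : ∀ n, T (e n) = (ω n : ℂ) • e (n + 1)) (hP : IsIdempotentElem P)
    (hPT : P * T = T * P) : P = 0 ∨ P = 1 := by
  have hS₀ : 0 < S := (hpos 0).trans_le (hS 0 le_rfl)
  obtain ⟨r, hSr, hrI⟩ : ∃ r, S < r ∧ r < I := ⟨(S + I) / 2, by linarith, by linarith⟩
  have hr₀ : 0 < r := hS₀.trans hSr
  set t := max (S / r) (r / I)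
  have ht₀ : 0 < t := lt_max_of_lt_left (div_pos hS₀ hr₀)
  have ht₁ : t < 1 := max_lt ((div_lt_one hr₀).2 hSr) ((div_lt_one (hr₀.trans hrI)).2 hrI)
  have hnorm : ∀ n, ‖((ω n / r : ℝ) : ℂ)‖ = ω n / r := fun n => by
    rw [Complex.norm_real, Real.norm_of_nonneg (div_pos (hpos n) hr₀).le]
  refine eq_zero_or_eq_one_of_commute_weightedShift e (ω := fun n => ((ω n / r : ℝ) : ℂ))
    (T := (r⁻¹ : ℂ) • T) ht₀ ht₁ (fun n => by exact_mod_cast (div_pos (hpos n) hr₀).ne')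
    (fun n hn => ?_) (fun n hn => ?_) (fun n => ?_) hP (by rw [mul_smul_comm, smul_mul_assoc, hPT])
  · rw [hnorm]
    exact (div_le_div_of_nonneg_right (hS n hn) hr₀.le).trans (le_max_left _ _)
  · rw [hnorm]
    calc t⁻¹ ≤ (r / I)⁻¹ := inv_anti₀ (div_pos hr₀ (hr₀.trans hrI)) (le_max_right _ _)
      _ = I / r := inv_div _ _
      _ ≤ ω n / r := div_le_div_of_nonneg_right (hI n hn) hr₀.le
  · rw [smul_apply, hT, smul_smul, Complex.ofReal_div, div_eq_inv_mul]

theorem stmt4 (e : HilbertBasis ℤ ℂ H) (ω : ℤ → ℝ)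
    (hpos : ∀ n, 0 < ω n) (hbdd : ∃ C : ℝ, ∀ n, ω n ≤ C)
    (hgap : sSup (ω '' {n : ℤ | 0 ≤ n}) < sInf (ω '' {n : ℤ | n < 0}))
    (T : H →L[ℂ] H) (hT : ∀ n : ℤ, T (e n) = (ω n : ℂ) • e (n + 1)) :
    StronglyIrreducible T := by
  rintro ⟨P, hP, hP₀, hP₁, hPT⟩
  refine (eq_zero_or_eq_one_of_commute_weightedShift_of_lt e hpos (fun n hn => ?_)
    (fun n hn => ?_) hgap hT hP hPT).elim hP₀ hP₁
  · exact le_csSup (hbdd.imp fun C hC => by rintro _ ⟨k, -, rfl⟩; exact hC k) ⟨n, hn, rfl⟩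
  · exact csInf_le ⟨0, by rintro _ ⟨k, -, rfl⟩; exact (hpos k).le⟩ ⟨n, hn, rfl⟩
end
end

section
/- Let (α_n)_{n≥1} be a sequence of positive real numbers with Σ_{n=1}^∞ n·α_n² < ∞ and Σ_{n=1}^∞ α_n = ∞. Then there is no bounded linear operator T on ℓ²(ℕ) whose matrix with respect to the standard orthonormal basis (e_n)_{n≥1} is the lower-triangular Toeplitz matrix with entries α, i.e., no bounded T with ⟨T e_j, e_i⟩ = α_{i−j+1} for all i ≥ j ≥ 1 and ⟨T e_j, e_i⟩ = 0 for i < j. -/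
open Filter Topology

noncomputable section

variable {H : Type*} [NormedAddCommGroup H] [InnerProductSpace ℂ H] [CompleteSpace H]

/-!
Put `x_N = e_0 + ⋯ + e_{N-1}`. The matrix entries give `⟪x_N, T x_N⟫ = ∑_{i<N} (a_0 + ⋯ + a_i)`,
while `‖x_N‖² = N`, so this double sum is at most `‖T‖ N`. For `N = 2m` each of the last `m`
terms dominates `a_0 + ⋯ + a_{m-1}`, hence the partial sums of the nonnegative sequence `a` are
bounded by `2‖T‖` and `a` is summable.
-/

open Finset

theorem lp.orthonormal_single {𝕜 ι : Type*} [RCLike 𝕜] [DecidableEq ι] :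
    Orthonormal 𝕜 fun i : ι => lp.single (E := fun _ : ι => 𝕜) 2 i (1 : 𝕜) := by
  rw [orthonormal_iff_ite]
  intro i j
  rw [lp.inner_single_left, lp.single_apply, Pi.single_apply]
  split_ifs <;> simp

theorem Orthonormal.re_sum_sum_inner_apply_le {𝕜 E ι : Type*} [RCLike 𝕜] [NormedAddCommGroup E]
    [InnerProductSpace 𝕜 E] {e : ι → E} (he : Orthonormal 𝕜 e) (T : E →L[𝕜] E) (s : Finset ι) :
    RCLike.re (∑ i ∈ s, ∑ j ∈ s, inner 𝕜 (e i) (T (e j))) ≤ ‖T‖ * #s := by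
  set x := ∑ i ∈ s, e i
  have hx : ‖x‖ ^ 2 = #s := by
    have := he.inner_sum (fun _ => 1) (fun _ => 1) s
    simp only [one_smul, map_one, mul_one, sum_const, nsmul_eq_mul] at this
    rw [← inner_self_eq_norm_sq (𝕜 := 𝕜), this]
    simp
  calc RCLike.re (∑ i ∈ s, ∑ j ∈ s, inner 𝕜 (e i) (T (e j)))
      = RCLike.re (inner 𝕜 x (T x)) := by
        congr 1
        rw [map_sum, sum_inner]
        simp_rw [inner_sum]
    _ ≤ ‖x‖ * ‖T x‖ := re_inner_le_norm _ _
    _ ≤ ‖x‖ * (‖T‖ * ‖x‖) := by gcongr; exact T.le_opNorm x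
    _ = ‖T‖ * #s := by rw [← hx]; ring

theorem Finset.sum_range_ite_le_sub_eq {M : Type*} [AddCommMonoid M] (a : ℕ → M) {i N : ℕ}
    (hi : i < N) :
    ∑ j ∈ range N, (if j ≤ i then a (i - j) else 0) = ∑ k ∈ range (i + 1), a k := by
  rw [sum_ite, sum_const_zero, add_zero, ← sum_range_reflect]
  congr 1
  ext j
  simp only [mem_filter, mem_range]
  omega

theorem Finset.nsmul_sum_range_le_sum_range_sum_range_succ {M : Type*} [AddCommMonoid M]
    [PartialOrder M] [IsOrderedAddMonoid M] {a : ℕ → M} (ha : ∀ n, 0 ≤ a n) (m : ℕ) :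
    m • ∑ k ∈ range m, a k ≤ ∑ i ∈ range (2 * m), ∑ k ∈ range (i + 1), a k := by
  calc m • ∑ k ∈ range m, a k
      = ∑ _i ∈ Ico m (2 * m), ∑ k ∈ range m, a k := by
        rw [sum_const, Nat.card_Ico, two_mul, Nat.add_sub_cancel]
    _ ≤ ∑ i ∈ Ico m (2 * m), ∑ k ∈ range (i + 1), a k := by
        refine sum_le_sum fun i hi => sum_le_sum_of_subset_of_nonneg ?_ fun k _ _ => ha k
        exact range_subset_range.mpr (by simp only [mem_Ico] at hi; omega)
    _ ≤ ∑ i ∈ range (2 * m), ∑ k ∈ range (i + 1), a k :=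
        sum_le_sum_of_subset_of_nonneg (fun i hi => by simp only [mem_Ico, mem_range] at hi ⊢; omega)
          fun i _ _ => sum_nonneg fun k _ => ha k

theorem summable_of_orthonormal_lowerTriangularToeplitz {𝕜 E : Type*} [RCLike 𝕜]
    [NormedAddCommGroup E] [InnerProductSpace 𝕜 E] {e : ℕ → E} (he : Orthonormal 𝕜 e)
    (T : E →L[𝕜] E) {a : ℕ → ℝ} (ha : ∀ n, 0 ≤ a n)
    (hT : ∀ i j, inner 𝕜 (e i) (T (e j)) = if j ≤ i then (a (i - j) : 𝕜) else 0) :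
    Summable a := by
  have hquad : ∀ N, ∑ i ∈ range N, ∑ k ∈ range (i + 1), a k ≤ ‖T‖ * N := by
    intro N
    have hsum : ∑ i ∈ range N, ∑ j ∈ range N, inner 𝕜 (e i) (T (e j))
        = ((∑ i ∈ range N, ∑ k ∈ range (i + 1), a k : ℝ) : 𝕜) := by
      rw [← sum_congr rfl fun i hi => sum_range_ite_le_sub_eq a (mem_range.mp hi)]
      push_cast [hT, apply_ite (RCLike.ofReal : ℝ → 𝕜)]
      simp
    simpa [hsum] using he.re_sum_sum_inner_apply_le T (range N)
  refine summable_of_sum_range_le ha (c := 2 * ‖T‖) fun m => ?_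
  rcases m.eq_zero_or_pos with rfl | hm
  · simp
  · have h := (nsmul_sum_range_le_sum_range_sum_range_succ ha m).trans (hquad (2 * m))
    rw [nsmul_eq_mul] at h
    push_cast at h
    exact le_of_mul_le_mul_left (a := (m : ℝ)) (by linarith) (by exact_mod_cast hm)

theorem stmt10_general (α : ℕ → ℝ) (hpos : ∀ n, 0 < α n)
    (h2 : ¬ Summable α) :
    ¬ ∃ T : lp (fun _ : ℕ => ℂ) 2 →L[ℂ] lp (fun _ : ℕ => ℂ) 2,
      ∀ i j : ℕ,
        (inner ℂ (lp.single 2 i (1 : ℂ)) (T (lp.single 2 j (1 : ℂ))) : ℂ) =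
          if j ≤ i then (α (i - j) : ℂ) else 0 := by
  rintro ⟨T, hT⟩
  exact h2 (summable_of_orthonormal_lowerTriangularToeplitz lp.orthonormal_single T
    (fun n => (hpos n).le) hT)

theorem stmt10 (α : ℕ → ℝ) (hpos : ∀ n, 0 < α n)
    (h1 : Summable fun n : ℕ => ((n : ℝ) + 1) * α n ^ 2)
    (h2 : ¬ Summable α) :
    ¬ ∃ T : lp (fun _ : ℕ => ℂ) 2 →L[ℂ] lp (fun _ : ℕ => ℂ) 2,
      ∀ i j : ℕ,
        (inner ℂ (lp.single 2 i (1 : ℂ)) (T (lp.single 2 j (1 : ℂ))) : ℂ) =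
          if j ≤ i then (α (i - j) : ℂ) else 0 :=
  stmt10_general α hpos h2
end
end

section
/- Let H be a separable infinite-dimensional complex Hilbert space. There exists an operator T ∈ B(H) such that: (1) T is not compact and is strongly irreducible; (2) there exists an orthonormal basis (e_n)_{n≥1} of H such that (T e_n)_{n≥1} is an unconditional Schauder basis of H. -/
open Filter Topology

noncomputable section

variable {H : Type*} [NormedAddCommGroup H] [InnerProductSpace ℂ H] [CompleteSpace H]

/-!
Take `T = 2 + S`, where `S` is the unilateral shift `e n ↦ e (n + 1)` along a Hilbert basis
indexed by `ℕ` (which exists by separability and infinite dimension). As `‖S‖ ≤ 1`, `T` is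
invertible: hence it is not compact, and `(T e n)` is the image of an orthonormal basis under an
isomorphism, so an unconditional basis. An idempotent `P` commuting with `T` commutes with `S`,
so it acts on coefficients as multiplication by the power series whose coefficients are those of
`P (e 0)`; this power series is idempotent in the domain `ℂ⟦X⟧`, hence `0` or `1`, and so is `P`.
-/

namespace GeneralSchauderBasis

variable {β 𝕜 X Y : Type*} [NontriviallyNormedField 𝕜] [NormedAddCommGroup X] [NormedSpace 𝕜 X]
  [NormedAddCommGroup Y] [NormedSpace 𝕜 Y]

def map {L : SummationFilter β} (b : GeneralSchauderBasis β 𝕜 X L) (T : X ≃L[𝕜] Y) :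
    GeneralSchauderBasis β 𝕜 Y L where
  basis i := T (b i)
  coord i := (b.coord i).comp (T.symm : Y →L[𝕜] X)
  ortho i j := by simpa using b.ortho i j
  expansion y := by
    simpa [Function.comp_def] using (b.expansion (T.symm y)).map T T.continuous

theorem coord_eq_of_tendsto {L : SummationFilter ℕ} (b : GeneralSchauderBasis ℕ 𝕜 X L)
    {α : ℕ → 𝕜} {x : X}
    (hx : Tendsto (fun k => ∑ n ∈ Finset.range k, α n • b n) atTop (𝓝 x)) (m : ℕ) :
    b.coord m x = α m := by
  classical
  refine tendsto_nhds_unique (((b.coord m).continuous.tendsto x).comp hx) ?_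
  refine tendsto_const_nhds.congr' ?_
  filter_upwards [eventually_gt_atTop m] with k hk
  simp only [Function.comp_apply, map_sum, map_smul, smul_eq_mul, b.ortho, Pi.single_apply,
    mul_ite, mul_one, mul_zero, Finset.sum_ite_eq, Finset.mem_range, hk, if_true]

end GeneralSchauderBasis

theorem GeneralSchauderBasis.isUnconditionalSchauderBasis
    (b : UnconditionalSchauderBasis ℕ ℂ H) : IsUnconditionalSchauderBasis b := by
  refine ⟨fun x => ⟨fun n => b.coord n x, (b.expansion x).tendsto_sum_nat, ?_⟩, ?_⟩
  · rintro α hα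
    exact funext fun m => (b.coord_eq_of_tendsto hα m).symm
  · intro α x hx σ
    have hα : (fun n => b.coord n x) = α := funext (b.coord_eq_of_tendsto hx)
    have hsum : HasSum (fun n => α n • b n) x := hα ▸ b.expansion x
    exact ⟨x, ((Equiv.hasSum_iff σ).mpr hsum).tendsto_sum_nat⟩

section HilbertBasisNat

variable {𝕜 E : Type*} [RCLike 𝕜] [NormedAddCommGroup E] [InnerProductSpace 𝕜 E]

theorem Orthonormal.countable [TopologicalSpace.SeparableSpace E] {ι : Type*} {v : ι → E}
    (hv : Orthonormal 𝕜 v) : Countable ι := by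
  refine Pairwise.countable_of_isOpen_disjoint (s := fun i => Metric.ball (v i) (1 / 2))
    (fun i j hij => Metric.ball_disjoint_ball ?_) (fun _ => Metric.isOpen_ball)
    (fun i => Metric.nonempty_ball.mpr (by norm_num))
  have hsq : ‖v i - v j‖ ^ 2 = 2 := by
    rw [@norm_sub_sq 𝕜, hv.2 hij, hv.1 i, hv.1 j]
    norm_num
  rw [dist_eq_norm]
  nlinarith [norm_nonneg (v i - v j)]

def HilbertBasis.reindex [CompleteSpace E] {ι ι' : Type*} (b : HilbertBasis ι 𝕜 E) (e : ι' ≃ ι) :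
    HilbertBasis ι' 𝕜 E :=
  HilbertBasis.mk (b.orthonormal.comp e e.injective)
    (by rw [EquivLike.range_comp, b.dense_span])

theorem exists_hilbertBasis_nat [CompleteSpace E] [TopologicalSpace.SeparableSpace E]
    (hE : ¬ FiniteDimensional 𝕜 E) : Nonempty (HilbertBasis ℕ 𝕜 E) := by
  obtain ⟨w, b, -⟩ := exists_hilbertBasis 𝕜 E
  have : Countable w := b.orthonormal.countable
  have : Infinite w := by
    by_contra hfin
    have : Fintype w := @Fintype.ofFinite w (not_infinite_iff_finite.mp hfin)
    exact hE b.toOrthonormalBasis.toBasis.finiteDimensional_of_finite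
  obtain ⟨e⟩ := nonempty_equiv_of_countable (α := ℕ) (β := w)
  exact ⟨b.reindex e⟩

end HilbertBasisNat

section Operators

variable {𝕜 E : Type*} [NontriviallyNormedField 𝕜] [NormedAddCommGroup E] [NormedSpace 𝕜 E]

theorem ContinuousLinearMap.isUnit_smul_one_add [CompleteSpace E] {A : E →L[𝕜] E} {c : 𝕜}
    (h : ‖A‖ < ‖c‖) : IsUnit (c • 1 + A) := by
  have hres : -c ∈ resolventSet 𝕜 A := spectrum.mem_resolventSet_of_norm_lt_mul <| by
    rw [norm_neg]
    exact (mul_le_of_le_one_right (norm_nonneg A) norm_id_le).trans_lt h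
  simpa [resolventSet, Algebra.algebraMap_eq_smul_one, ← neg_add'] using hres.neg

theorem IsUnit.not_isCompactOperator [CompleteSpace 𝕜] [LocallyCompactSpace 𝕜] {T : E →L[𝕜] E}
    (hT : IsUnit T) (hE : ¬ FiniteDimensional 𝕜 E) : ¬ IsCompactOperator T := by
  intro hcpt
  refine hE (isCompactOperator_id_iff_finiteDimensional.mp ?_)
  have hinv : (↑hT.unit⁻¹ * T : E →L[𝕜] E) = 1 := hT.unit.inv_mul
  have hid : ⇑(↑hT.unit⁻¹ : E →L[𝕜] E) ∘ ⇑T = id := funext (DFunLike.congr_fun hinv)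
  exact hid ▸ hcpt.clm_comp (↑hT.unit⁻¹ : E →L[𝕜] E)

end Operators

namespace HilbertBasis

variable {𝕜 E : Type*} [RCLike 𝕜] [NormedAddCommGroup E] [InnerProductSpace 𝕜 E]
  (b : HilbertBasis ℕ 𝕜 E)

/-- Operators commuting with `shift` are analytic Toeplitz operators; this is the Taylor series
of the symbol, read off from the image of `b 0`. -/
def symbol (P : E →L[𝕜] E) : PowerSeries 𝕜 :=
  PowerSeries.mk fun n => b.repr (P (b 0)) n

theorem symbol_zero : b.symbol 0 = 0 := by
  ext n
  simp [symbol]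

theorem symbol_one : b.symbol 1 = 1 := by
  classical
  ext n
  simp [symbol, b.repr_self, PowerSeries.coeff_one, lp.single_apply, Pi.single_apply]

variable [CompleteSpace E]

def shift : E →L[𝕜] E :=
  ((b.orthonormal.comp _ (add_left_injective 1)).orthogonalFamily.linearIsometry.comp
    b.repr.toLinearIsometry).toContinuousLinearMap

theorem norm_shift_le : ‖b.shift‖ ≤ 1 :=
  LinearIsometry.norm_toContinuousLinearMap_le _

theorem shift_apply_basis (n : ℕ) : b.shift (b n) = b (n + 1) := by
  classical
  simp [shift, b.repr_self, OrthogonalFamily.linearIsometry_apply_single]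

theorem shift_pow_apply_basis (k n : ℕ) : (b.shift ^ k) (b n) = b (n + k) := by
  induction k with
  | zero => simp
  | succ k ih => rw [pow_succ', mul_apply_eq_comp, ih, shift_apply_basis, add_assoc]

theorem repr_shift_pow_apply (k m : ℕ) (y : E) :
    b.repr ((b.shift ^ k) y) m = if k ≤ m then b.repr y (m - k) else 0 := by
  classical
  have h := (innerSL 𝕜 (b m)).hasSum ((b.shift ^ k).hasSum (b.hasSum_repr y))
  simp only [map_smul, shift_pow_apply_basis, innerSL_apply_apply, smul_eq_mul,
    orthonormal_iff_ite.mp b.orthonormal] at h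
  rw [b.repr_apply_apply]
  refine h.unique ?_
  split_ifs with hkm
  · convert hasSum_ite_eq (m - k) (b.repr y (m - k)) using 2 with j
    by_cases hj : j = m - k
    · simp [hj, Nat.sub_add_cancel hkm]
    · simp [hj, show m ≠ j + k by omega]
  · convert hasSum_zero with j
    rw [if_neg (by omega), mul_zero]

variable {b}

theorem apply_basis_of_commute_shift {P : E →L[𝕜] E} (hP : Commute P b.shift) (n : ℕ) :
    P (b n) = (b.shift ^ n) (P (b 0)) := by
  conv_lhs => rw [← zero_add n, ← shift_pow_apply_basis]
  exact DFunLike.congr_fun (hP.pow_right n).eq (b 0)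

theorem repr_apply_of_commute_shift {P : E →L[𝕜] E} (hP : Commute P b.shift) (y : E) (m : ℕ) :
    b.repr (P y) m = ∑ j ∈ Finset.range (m + 1), b.repr y j * b.repr (P (b 0)) (m - j) := by
  have h := (innerSL 𝕜 (b m)).hasSum (P.hasSum (b.hasSum_repr y))
  have hcoeff : ∀ j, inner 𝕜 (b m) (P (b j)) =
      if j ≤ m then b.repr (P (b 0)) (m - j) else 0 := fun j => by
    rw [← b.repr_apply_apply, apply_basis_of_commute_shift hP, repr_shift_pow_apply]
  simp only [map_smul, innerSL_apply_apply, smul_eq_mul, hcoeff] at h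
  rw [b.repr_apply_apply, ← h.tsum_eq, tsum_eq_sum (s := Finset.range (m + 1))]
  · refine Finset.sum_congr rfl fun j hj => ?_
    rw [if_pos (Nat.lt_succ_iff.mp (Finset.mem_range.mp hj))]
  · intro j hj
    rw [if_neg (by simpa [Nat.lt_succ_iff] using hj), mul_zero]

theorem symbol_mul {P Q : E →L[𝕜] E} (hP : Commute P b.shift) :
    b.symbol (P * Q) = b.symbol P * b.symbol Q := by
  ext m
  rw [mul_comm, PowerSeries.coeff_mul, Finset.Nat.sum_antidiagonal_eq_sum_range_succ
    (fun i j => PowerSeries.coeff i (b.symbol Q) * PowerSeries.coeff j (b.symbol P))]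
  simp only [symbol, PowerSeries.coeff_mk, mul_apply_eq_comp]
  exact repr_apply_of_commute_shift hP _ m

theorem eq_of_symbol_eq {P Q : E →L[𝕜] E} (hP : Commute P b.shift) (hQ : Commute Q b.shift)
    (h : b.symbol P = b.symbol Q) : P = Q := by
  have h0 : P (b 0) = Q (b 0) := b.repr.injective <| lp.ext <| funext fun n => by
    simpa [symbol] using congrArg (PowerSeries.coeff n) h
  refine ContinuousLinearMap.ext_on
    (Submodule.dense_iff_topologicalClosure_eq_top.mpr b.dense_span) ?_
  rintro _ ⟨n, rfl⟩
  rw [apply_basis_of_commute_shift hP, apply_basis_of_commute_shift hQ, h0]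

theorem eq_zero_or_one_of_commute_shift {P : E →L[𝕜] E} (hP : Commute P b.shift)
    (hidem : IsIdempotentElem P) : P = 0 ∨ P = 1 := by
  have hsymbol : IsIdempotentElem (b.symbol P) := by
    rw [IsIdempotentElem, ← symbol_mul hP, hidem.eq]
  rcases IsIdempotentElem.iff_eq_zero_or_one.mp hsymbol with h | h
  · exact .inl (eq_of_symbol_eq hP (.zero_left _) (h.trans b.symbol_zero.symm))
  · exact .inr (eq_of_symbol_eq hP (.one_left _) (h.trans b.symbol_one.symm))

end HilbertBasis

theorem HilbertBasis.stronglyIrreducible_smul_one_add_shift (b : HilbertBasis ℕ ℂ H) (c : ℂ) :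
    StronglyIrreducible (c • 1 + b.shift) := by
  rintro ⟨P, hidem, hP0, hP1, hcomm⟩
  have hshift : Commute P b.shift := by
    simpa using Commute.sub_right (hcomm : Commute P _) ((Commute.one_right P).smul_right c)
  exact (eq_zero_or_one_of_commute_shift hshift hidem).elim hP0 hP1

theorem stmt16 [TopologicalSpace.SeparableSpace H] (hinf : ¬ FiniteDimensional ℂ H) :
    ∃ T : H →L[ℂ] H, ¬ IsCompactOperator ⇑T ∧ StronglyIrreducible T ∧
      ∃ e : HilbertBasis ℕ ℂ H,
        IsUnconditionalSchauderBasis (fun n => T (e n)) := by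
  obtain ⟨b⟩ := exists_hilbertBasis_nat hinf
  have hT : IsUnit ((2 : ℂ) • 1 + b.shift) :=
    ContinuousLinearMap.isUnit_smul_one_add (b.norm_shift_le.trans_lt (by norm_num))
  refine ⟨_, hT.not_isCompactOperator hinf, b.stronglyIrreducible_smul_one_add_shift 2, b, ?_⟩
  exact (b.toUnconditionalSchauderBasis.map
    (ContinuousLinearEquiv.unitsEquiv ℂ H hT.unit)).isUnconditionalSchauderBasis
end
end
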